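/- Let A be the 3×3 matrix [[−(k+d), 0, b],[k, −(δ+d), 0],[0, p, −c]] with k, d, δ, p, c, b > 0. Then A is Hurwitz (all eigenvalues have negative real part) if and only if b·k·p < c(δ+d)(k+d). -/
import Mathlib

theorem cubic_neg_re (a1 a2 a3 : ℝ) (h1 : 0 < a1) (h2 : 0 < a2) (h3 : 0 < a3) (h12 : a3 < a1*a2)
    (z : ℂ) (hz : z^3 + a1*z^2 + a2*z + a3 = 0) : z.re < 0 := by
  set x := z.re with hx
  set y := z.im with hy
  have hre : x^3 - 3*x*y^2 + a1*(x^2 - y^2) + a2*x + a3 = 0 := by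
    have := congrArg Complex.re hz
    simp [pow_succ, Complex.mul_re, Complex.mul_im] at this
    linarith [this]
  have him : y * (3*x^2 - y^2 + 2*a1*x + a2) = 0 := by
    have := congrArg Complex.im hz
    simp [pow_succ, Complex.mul_re, Complex.mul_im] at this
    nlinarith [this]
  by_contra hx0
  push_neg at hx0
  rcases mul_eq_zero.1 him with hy0 | hy2
  · rw [hy0] at hre
    nlinarith [mul_nonneg hx0 (mul_nonneg hx0 hx0), mul_nonneg h1.le (mul_nonneg hx0 hx0),
      mul_nonneg h2.le hx0]
  · have hy2' : y^2 = 3*x^2 + 2*a1*x + a2 := by linarith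
    have h4 : x*y^2 = x*(3*x^2+2*a1*x+a2) := by rw [hy2']
    nlinarith [mul_nonneg hx0 (mul_nonneg hx0 hx0), mul_nonneg h1.le (mul_nonneg hx0 hx0),
      mul_nonneg h2.le hx0, mul_nonneg (mul_nonneg h1.le h1.le) hx0]

/-- The linearized infected subsystem matrix is Hurwitz iff `b k p < c (δ+d)(k+d)`. -/
theorem stmt_9 (k d δ p c b : ℝ) (hk : 0 < k) (hd : 0 < d) (hδ : 0 < δ)
    (hp : 0 < p) (hc : 0 < c) (hb : 0 < b) :
    (∀ z ∈ spectrum ℂ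
      ((!![-(k + d), 0, b; k, -(δ + d), 0; 0, p, -c] : Matrix (Fin 3) (Fin 3) ℝ).map
        (Complex.ofReal ·)), z.re < 0) ↔
    b * k * p < c * (δ + d) * (k + d) := by
  have hspec : ∀ z : ℂ, z ∈ spectrum ℂ
      ((!![-(k + d), 0, b; k, -(δ + d), 0; 0, p, -c] : Matrix (Fin 3) (Fin 3) ℝ).map
        (Complex.ofReal ·)) ↔
      (z + (k+d)) * (z + (δ+d)) * (z + c) = (b:ℂ) * k * p := by
    intro z
    rw [spectrum.mem_iff, Matrix.isUnit_iff_isUnit_det, isUnit_iff_ne_zero, not_ne_iff]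
    have : (algebraMap ℂ (Matrix (Fin 3) (Fin 3) ℂ)) z -
        (!![-(k + d), 0, b; k, -(δ + d), 0; 0, p, -c] : Matrix (Fin 3) (Fin 3) ℝ).map
          (Complex.ofReal ·) =
        !![z + (k+d), 0, -b; -k, z + (δ+d), 0; 0, -p, z + c] := by
      ext i j
      fin_cases i <;> fin_cases j <;>
        simp [Matrix.algebraMap_eq_diagonal, Matrix.diagonal_apply] <;> ring
    rw [this, Matrix.det_fin_three]
    simp [Matrix.cons_val_zero, Matrix.cons_val_one]
    constructor <;> intro h <;> linear_combination h
  constructor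
  · intro h
    by_contra hle
    push_neg at hle
    -- find a real nonnegative root by IVT
    set f : ℝ → ℝ := fun t => (t + (k+d)) * (t + (δ+d)) * (t + c) with hf
    have hcont : ContinuousOn f (Set.Icc 0 (max (b*k*p) 1)) := by fun_prop
    have hT : 0 ≤ max (b*k*p) 1 := le_trans zero_le_one (le_max_right _ _)
    have hf0 : f 0 ≤ b*k*p := by
      simp only [hf, zero_add]
      nlinarith
    have hfT : b*k*p ≤ f (max (b*k*p) 1) := by
      have h1 : b*k*p ≤ max (b*k*p) 1 := le_max_left _ _
      have h2 : (1:ℝ) ≤ max (b*k*p) 1 := le_max_right _ _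
      calc b*k*p ≤ (max (b*k*p) 1) + (k+d) := by linarith
        _ = ((max (b*k*p) 1) + (k+d)) * 1 * 1 := by ring
        _ ≤ ((max (b*k*p) 1) + (k+d)) * ((max (b*k*p) 1) + (δ+d)) * ((max (b*k*p) 1) + c) := by
            apply mul_le_mul (mul_le_mul le_rfl (by linarith) one_pos.le (by nlinarith))
              (by linarith) one_pos.le (by nlinarith)
    have := intermediate_value_Icc hT hcont
    obtain ⟨t₀, ht₀, hft₀⟩ := this ⟨hf0, hfT⟩
    have hmem : (t₀ : ℂ) ∈ spectrum ℂ
        ((!![-(k + d), 0, b; k, -(δ + d), 0; 0, p, -c] : Matrix (Fin 3) (Fin 3) ℝ).map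
          (Complex.ofReal ·)) := by
      rw [hspec]
      have h6 := congrArg (Complex.ofReal) hft₀
      simp only [hf] at h6
      push_cast at h6
      linear_combination h6
    have := h _ hmem
    simp only [Complex.ofReal_re] at this
    linarith [ht₀.1]
  · intro hlt z hz
    rw [hspec] at hz
    have hz' : z^3 + ((k+d)+(δ+d)+c : ℝ)*z^2
        + ((k+d)*(δ+d)+(k+d)*c+(δ+d)*c : ℝ)*z
        + ((k+d)*(δ+d)*c - b*k*p : ℝ) = 0 := by
      push_cast
      linear_combination hz
    have hK : (0:ℝ) < k+d := by linarith
    have hD : (0:ℝ) < δ+d := by linarith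
    exact cubic_neg_re _ _ _ (by nlinarith) (by nlinarith) (by nlinarith)
      (by nlinarith [mul_pos (mul_pos hK hD) hc, mul_pos (mul_pos hK hK) hD,
        mul_pos (mul_pos hK hK) hc, mul_pos (mul_pos hD hD) hK, mul_pos (mul_pos hD hD) hc,
        mul_pos (mul_pos hc hc) hK, mul_pos (mul_pos hc hc) hD, mul_pos hb (mul_pos hk hp)]) z hz'
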